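/- arXiv:2405.14792 — 3 statements merged into one kernel-verified Lean document; each statement's English description precedes it below -/
import Mathlib

section
/- With μ_{ab} := [B_a, B_b] − (1/2) Σ_{c,d} ε_{abcd} [B_c†, B_d†] for endomorphisms B_1,…,B_4 of a finite-dimensional complex Hermitian space V, one has μ_{ab} = 0 for all 1 ≤ a < b ≤ 4 if and only if [B_a, B_b] = 0 for all a, b ∈ {1,2,3,4}. -/
noncomputable section

/-- The four-dimensional Levi-Civita symbol, with `eps4 0 1 2 3 = 1`. -/
def eps4 (a b c d : Fin 4) : ℂ :=
  ∑ σ : Equiv.Perm (Fin 4),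
    if (a, b, c, d) = (σ 0, σ 1, σ 2, σ 3) then (((Equiv.Perm.sign σ : ℤˣ) : ℤ) : ℂ) else 0

section LieInst

attribute [local instance 100] LieRing.ofAssociativeRing

/-- Integer version of `eps4`. -/
def epsZ (a b c d : Fin 4) : ℤ :=
  ∑ σ : Equiv.Perm (Fin 4),
    if (a, b, c, d) = (σ 0, σ 1, σ 2, σ 3) then ((Equiv.Perm.sign σ : ℤˣ) : ℤ) else 0

lemma eps4_eq (a b c d : Fin 4) : eps4 a b c d = ((epsZ a b c d : ℤ) : ℂ) := by
  unfold eps4 epsZ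
  push_cast [apply_ite (fun n : ℤ => (n : ℂ))]
  rfl


lemma S01 {V : Type*} [NormedAddCommGroup V] [InnerProductSpace ℂ V]
    (A : Fin 4 → (V →ₗ[ℂ] V)) :
    ∑ c : Fin 4, ∑ d : Fin 4, eps4 0 1 c d • ⁅A c, A d⁆ = (2 : ℂ) • ⁅A 2, A 3⁆ := by
  simp only [Fin.sum_univ_four, eps4_eq, (by decide : epsZ 0 1 0 0 = 0), (by decide : epsZ 0 1 0 1 = 0), (by decide : epsZ 0 1 0 2 = 0), (by decide : epsZ 0 1 0 3 = 0), (by decide : epsZ 0 1 1 0 = 0), (by decide : epsZ 0 1 1 1 = 0), (by decide : epsZ 0 1 1 2 = 0), (by decide : epsZ 0 1 1 3 = 0), (by decide : epsZ 0 1 2 0 = 0), (by decide : epsZ 0 1 2 1 = 0), (by decide : epsZ 0 1 2 2 = 0), (by decide : epsZ 0 1 2 3 = 1), (by decide : epsZ 0 1 3 0 = 0), (by decide : epsZ 0 1 3 1 = 0), (by decide : epsZ 0 1 3 2 = -1), (by decide : epsZ 0 1 3 3 = 0),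
    Int.cast_zero, Int.cast_one, Int.cast_neg, zero_smul, one_smul, neg_smul,
    add_zero, zero_add]
  rw [show ⁅A 3, A 2⁆ = -⁅A 2, A 3⁆ from (lie_skew _ _).symm]
  module

lemma S02 {V : Type*} [NormedAddCommGroup V] [InnerProductSpace ℂ V]
    (A : Fin 4 → (V →ₗ[ℂ] V)) :
    ∑ c : Fin 4, ∑ d : Fin 4, eps4 0 2 c d • ⁅A c, A d⁆ = (-2 : ℂ) • ⁅A 1, A 3⁆ := by
  simp only [Fin.sum_univ_four, eps4_eq, (by decide : epsZ 0 2 0 0 = 0), (by decide : epsZ 0 2 0 1 = 0), (by decide : epsZ 0 2 0 2 = 0), (by decide : epsZ 0 2 0 3 = 0), (by decide : epsZ 0 2 1 0 = 0), (by decide : epsZ 0 2 1 1 = 0), (by decide : epsZ 0 2 1 2 = 0), (by decide : epsZ 0 2 1 3 = -1), (by decide : epsZ 0 2 2 0 = 0), (by decide : epsZ 0 2 2 1 = 0), (by decide : epsZ 0 2 2 2 = 0), (by decide : epsZ 0 2 2 3 = 0), (by decide : epsZ 0 2 3 0 = 0), (by decide : epsZ 0 2 3 1 = 1), (by decide : epsZ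 0 2 3 2 = 0), (by decide : epsZ 0 2 3 3 = 0),
    Int.cast_zero, Int.cast_one, Int.cast_neg, zero_smul, one_smul, neg_smul,
    add_zero, zero_add]
  rw [show ⁅A 3, A 1⁆ = -⁅A 1, A 3⁆ from (lie_skew _ _).symm]
  module

lemma S03 {V : Type*} [NormedAddCommGroup V] [InnerProductSpace ℂ V]
    (A : Fin 4 → (V →ₗ[ℂ] V)) :
    ∑ c : Fin 4, ∑ d : Fin 4, eps4 0 3 c d • ⁅A c, A d⁆ = (2 : ℂ) • ⁅A 1, A 2⁆ := by
  simp only [Fin.sum_univ_four, eps4_eq, (by decide : epsZ 0 3 0 0 = 0), (by decide : epsZ 0 3 0 1 = 0), (by decide : epsZ 0 3 0 2 = 0), (by decide : epsZ 0 3 0 3 = 0), (by decide : epsZ 0 3 1 0 = 0), (by decide : epsZ 0 3 1 1 = 0), (by decide : epsZ 0 3 1 2 = 1), (by decide : epsZ 0 3 1 3 = 0), (by decide : epsZ 0 3 2 0 = 0), (by decide : epsZ 0 3 2 1 = -1), (by decide : epsZ 0 3 2 2 = 0), (by decide : epsZ 0 3 2 3 = 0), (by decide : epsZ 0 3 3 0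 = 0), (by decide : epsZ 0 3 3 1 = 0), (by decide : epsZ 0 3 3 2 = 0), (by decide : epsZ 0 3 3 3 = 0),
    Int.cast_zero, Int.cast_one, Int.cast_neg, zero_smul, one_smul, neg_smul,
    add_zero, zero_add]
  rw [show ⁅A 2, A 1⁆ = -⁅A 1, A 2⁆ from (lie_skew _ _).symm]
  module


section Main

variable {V : Type*} [NormedAddCommGroup V] [InnerProductSpace ℂ V] [FiniteDimensional ℂ V]

/-- The trace of `T† T` is a nonnegative real, zero iff `T = 0`. -/
lemma trace_adj (T : V →ₗ[ℂ] V) :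
    ∃ r : ℝ, 0 ≤ r ∧ LinearMap.trace ℂ V (LinearMap.adjoint T * T) = (r : ℂ) ∧
      (r = 0 → T = 0) := by
  classical
  set b := stdOrthonormalBasis ℂ V
  refine ⟨∑ i, ‖T (b i)‖ ^ 2, Finset.sum_nonneg fun i _ => by positivity, ?_, ?_⟩
  · rw [LinearMap.trace_eq_matrix_trace ℂ b.toBasis, Matrix.trace]
    push_cast
    refine Finset.sum_congr rfl fun i _ => ?_
    rw [Matrix.diag_apply, LinearMap.toMatrix_apply, OrthonormalBasis.coe_toBasis,
      OrthonormalBasis.coe_toBasis_repr_apply, OrthonormalBasis.repr_apply_apply]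
    rw [Module.End.mul_apply, LinearMap.adjoint_inner_right]
    rw [inner_self_eq_norm_sq_to_K]
    norm_cast
  · intro hr
    have hz : ∀ i, T (b i) = 0 := by
      intro i
      have := (Finset.sum_eq_zero_iff_of_nonneg (fun i _ => by positivity)).mp hr i
        (Finset.mem_univ i)
      simpa [pow_eq_zero_iff, norm_eq_zero] using this
    refine b.toBasis.ext fun i => ?_
    simpa using hz i

lemma adj_lie (S T : V →ₗ[ℂ] V) :
    ⁅LinearMap.adjoint S, LinearMap.adjoint T⁆ = -LinearMap.adjoint ⁅S, T⁆ := by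
  simp only [Ring.lie_def, map_sub, LinearMap.adjoint_comp, Module.End.mul_eq_comp]
  abel

lemma tr_lie_mul (x y z : V →ₗ[ℂ] V) :
    LinearMap.trace ℂ V (⁅x, y⁆ * z) = LinearMap.trace ℂ V (x * ⁅y, z⁆) := by
  simp only [Ring.lie_def, sub_mul, mul_sub, map_sub]
  rw [mul_assoc x y z, mul_assoc y x z, LinearMap.trace_mul_comm ℂ y (x * z), mul_assoc x z y]

lemma jacobi_tr (a b c d : V →ₗ[ℂ] V) :
    LinearMap.trace ℂ V (⁅a, b⁆ * ⁅c, d⁆) + LinearMap.trace ℂ V (⁅a, c⁆ * ⁅d, b⁆) +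
      LinearMap.trace ℂ V (⁅a, d⁆ * ⁅b, c⁆) = 0 := by
  rw [tr_lie_mul, tr_lie_mul, tr_lie_mul, ← map_add, ← map_add, ← mul_add, ← mul_add,
    lie_jacobi b c d]
  simp

end Main

end LieInst

/-- with `μ_{ab} = [B_a,B_b] - ½ Σ_{c,d} ε_{abcd} [B_c†,B_d†]`, one has
`μ_{ab} = 0` for all `a < b` if and only if `[B_a,B_b] = 0` for all `a, b`. -/
theorem stmt1 {V : Type*} [NormedAddCommGroup V] [InnerProductSpace ℂ V] [FiniteDimensional ℂ V]
    (B : Fin 4 → (V →ₗ[ℂ] V)) (μ : Fin 4 → Fin 4 → (V →ₗ[ℂ] V))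
    (hμ : ∀ a b, μ a b = ⁅B a, B b⁆ - (1 / 2 : ℂ) •
      ∑ c : Fin 4, ∑ d : Fin 4,
        eps4 a b c d • ⁅LinearMap.adjoint (B c), LinearMap.adjoint (B d)⁆) :
    (∀ a b : Fin 4, a < b → μ a b = 0) ↔ (∀ a b : Fin 4, ⁅B a, B b⁆ = 0) := by
  letI : LieRing (V →ₗ[ℂ] V) := LieRing.ofAssociativeRing
  set A : Fin 4 → (V →ₗ[ℂ] V) := fun i => LinearMap.adjoint (B i) with hA
  constructor
  · intro h
    have h01 : ⁅B 0, B 1⁆ = -LinearMap.adjoint ⁅B 2, B 3⁆ := by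
      have h0 := h 0 1 (by decide)
      rw [hμ 0 1, S01 A, smul_smul, show (1 / 2 : ℂ) * 2 = 1 by norm_num, one_smul] at h0
      rw [← adj_lie]
      exact sub_eq_zero.mp h0
    have h02 : ⁅B 0, B 2⁆ = LinearMap.adjoint ⁅B 1, B 3⁆ := by
      have h0 := h 0 2 (by decide)
      rw [hμ 0 2, S02 A, smul_smul, show (1 / 2 : ℂ) * (-2) = -1 by norm_num,
        neg_one_smul, sub_neg_eq_add] at h0
      have h0' : ⁅B 0, B 2⁆ = -⁅A 1, A 3⁆ := eq_neg_of_add_eq_zero_left h0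
      rw [h0', show ⁅A 1, A 3⁆ = -LinearMap.adjoint ⁅B 1, B 3⁆ from adj_lie (B 1) (B 3),
        neg_neg]
    have h03 : ⁅B 0, B 3⁆ = -LinearMap.adjoint ⁅B 1, B 2⁆ := by
      have h0 := h 0 3 (by decide)
      rw [hμ 0 3, S03 A, smul_smul, show (1 / 2 : ℂ) * 2 = 1 by norm_num, one_smul] at h0
      rw [← adj_lie]
      exact sub_eq_zero.mp h0
    have hj := jacobi_tr (B 0) (B 1) (B 2) (B 3)
    rw [show ⁅B 3, B 1⁆ = -⁅B 1, B 3⁆ from (lie_skew _ _).symm, h01, h02, h03] at hj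
    obtain ⟨r1, hr1, he1, hz1⟩ := trace_adj ⁅B 2, B 3⁆
    obtain ⟨r2, hr2, he2, hz2⟩ := trace_adj ⁅B 1, B 3⁆
    obtain ⟨r3, hr3, he3, hz3⟩ := trace_adj ⁅B 1, B 2⁆
    rw [neg_mul, mul_neg, neg_mul, map_neg, map_neg, map_neg, he1, he2, he3] at hj
    have hr : r1 + r2 + r3 = 0 := by
      have hc : ((r1 + r2 + r3 : ℝ) : ℂ) = 0 := by push_cast; linear_combination -hj
      exact_mod_cast hc
    have hz23 : ⁅B 2, B 3⁆ = 0 := hz1 (by linarith)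
    have hz13 : ⁅B 1, B 3⁆ = 0 := hz2 (by linarith)
    have hz12 : ⁅B 1, B 2⁆ = 0 := hz3 (by linarith)
    have hz01 : ⁅B 0, B 1⁆ = 0 := by rw [h01, hz23, map_zero, neg_zero]
    have hz02 : ⁅B 0, B 2⁆ = 0 := by rw [h02, hz13, map_zero]
    have hz03 : ⁅B 0, B 3⁆ = 0 := by rw [h03, hz12, map_zero, neg_zero]
    have key : ∀ a b : Fin 4, a < b → ⁅B a, B b⁆ = 0 := by
      intro a b hab
      fin_cases a <;> fin_cases b <;>
        first
          | exact absurd hab (by decide)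
          | exact hz01 | exact hz02 | exact hz03
          | exact hz12 | exact hz13 | exact hz23
    intro a b
    rcases lt_trichotomy a b with hlt | heq | hgt
    · exact key a b hlt
    · rw [heq]; exact lie_self _
    · rw [show ⁅B a, B b⁆ = -⁅B b, B a⁆ from (lie_skew _ _).symm, key b a hgt, neg_zero]
  · intro h a b _
    have hAz : ∀ c d : Fin 4, ⁅LinearMap.adjoint (B c), LinearMap.adjoint (B d)⁆ = 0 := by
      intro c d
      rw [adj_lie, h c d, map_zero, neg_zero]
    rw [hμ]
    simp [hAz, h]

end
end

section
/- Let V and W_1,…,W_N be finite-dimensional complex Hermitian vector spaces, B_1,…,B_4 ∈ End(V), I_A ∈ Hom(W_A, V) for A = 1,…,N, and ζ > 0 a real number. Suppose the D-term equation Σ_{a=1}^{4} [B_a, B_a†] + Σ_{A=1}^{N} I_A I_A† = ζ · 1_V holds. If S ⊆ V is a subspace with B_a(S) ⊆ S for all a and im(I_A) ⊆ S for all A, then S = V. -/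
open scoped InnerProductSpace
noncomputable section

set_option linter.unusedSectionVars false in
lemma trace_eq_sum_inner' {V : Type*} [NormedAddCommGroup V] [InnerProductSpace ℂ V]
    [FiniteDimensional ℂ V] {ι : Type*} [Fintype ι] [DecidableEq ι]
    (b : OrthonormalBasis ι ℂ V) (T : V →ₗ[ℂ] V) :
    LinearMap.trace ℂ V T = ∑ i, ⟪b i, T (b i)⟫_ℂ := by
  rw [LinearMap.trace_eq_matrix_trace ℂ b.toBasis, Matrix.trace]
  congr 1; ext i
  rw [Matrix.diag_apply, LinearMap.toMatrix_apply, OrthonormalBasis.coe_toBasis,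
    b.coe_toBasis_repr_apply, b.repr_apply_apply]

set_option linter.unusedSectionVars false in
lemma trace_adjoint_comp_eq {V : Type*} [NormedAddCommGroup V] [InnerProductSpace ℂ V]
    [FiniteDimensional ℂ V] {ι : Type*} [Fintype ι] [DecidableEq ι]
    (b : OrthonormalBasis ι ℂ V) (T : V →ₗ[ℂ] V) :
    LinearMap.trace ℂ V (LinearMap.adjoint T ∘ₗ T) = ((∑ i, ‖T (b i)‖ ^ 2 : ℝ) : ℂ) := by
  rw [trace_eq_sum_inner' b]
  push_cast
  refine Finset.sum_congr rfl fun i _ => ?_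
  rw [Function.comp_apply, LinearMap.adjoint_inner_right,
    inner_self_eq_norm_sq_to_K]
  norm_cast

/-- stability from the D-term equation. If
`Σ_a [B_a,B_a†] + Σ_A I_A I_A† = ζ·1_V` with `ζ > 0`, then any subspace `S ⊆ V` invariant
under all `B_a` and containing all images `im(I_A)` is the whole space. -/
theorem stmt3 {V : Type*} [NormedAddCommGroup V] [InnerProductSpace ℂ V] [FiniteDimensional ℂ V]
    {N : ℕ} (W : Fin N → Type*) [∀ A, NormedAddCommGroup (W A)]
    [∀ A, InnerProductSpace ℂ (W A)] [∀ A, FiniteDimensional ℂ (W A)]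
    (B : Fin 4 → (V →ₗ[ℂ] V)) (I : ∀ A, W A →ₗ[ℂ] V) (ζ : ℝ) (hζ : 0 < ζ)
    (hD : ∑ a : Fin 4, ⁅B a, LinearMap.adjoint (B a)⁆
        + ∑ A : Fin N, (I A) ∘ₗ LinearMap.adjoint (I A)
        = (ζ : ℂ) • (LinearMap.id : V →ₗ[ℂ] V))
    (S : Submodule ℂ V) (hB : ∀ a : Fin 4, ∀ v ∈ S, B a v ∈ S)
    (hI : ∀ A : Fin N, LinearMap.range (I A) ≤ S) :
    S = ⊤ := by
  by_contra hS
  have hbot : Sᗮ ≠ ⊥ := by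
    intro h
    exact hS (by simpa [h] using (Submodule.orthogonal_orthogonal S).symm)
  obtain ⟨x, hxmem, hx0⟩ := Submodule.exists_mem_ne_zero_of_ne_bot hbot
  -- the orthogonal projection onto Sᗮ, as a linear map on V
  set P : V →ₗ[ℂ] V := ((Sᗮ).subtypeL ∘L Submodule.orthogonalProjectionOnto Sᗮ).toLinearMap with hPdef
  have hPapply : ∀ v : V, P v = (Submodule.orthogonalProjectionOnto Sᗮ v : V) := fun v => rfl
  have hPmem : ∀ v : V, P v ∈ Sᗮ := fun v => (Submodule.orthogonalProjectionOnto Sᗮ v).2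
  have hPid : ∀ v ∈ Sᗮ, P v = v := fun v hv => by
    simp [hPapply, Submodule.orthogonalProjectionOnto_mem_subspace_eq_self ⟨v, hv⟩]
  have hPS : ∀ v ∈ S, P v = 0 := fun v hv => by
    have : v ∈ Sᗮᗮ := Submodule.le_orthogonal_orthogonal S hv
    simp [hPapply, Submodule.orthogonalProjectionOnto_apply_of_mem_orthogonal this]
  have hPP : P ∘ₗ P = P := by
    ext v; exact hPid _ (hPmem v)
  have hPadj : LinearMap.adjoint P = P := by
    refine ((LinearMap.eq_adjoint_iff P P).mpr fun u v => ?_).symm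
    exact Submodule.inner_starProjection_left_eq_right Sᗮ u v
  have hPnorm : ∀ v : V, ‖P v‖ ≤ ‖v‖ := by
    intro v
    rw [hPapply]
    simpa using (Submodule.orthogonalProjectionOnto Sᗮ).le_opNorm v |>.trans
      (by nlinarith [Submodule.orthogonalProjectionOnto_norm_le Sᗮ, norm_nonneg v])
  -- adjoints of B a preserve Sᗮ
  have hadjmem : ∀ a : Fin 4, ∀ w ∈ Sᗮ, LinearMap.adjoint (B a) w ∈ Sᗮ := by
    intro a w hw
    rw [Submodule.mem_orthogonal]
    intro u hu
    rw [LinearMap.adjoint_inner_right]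
    exact (Submodule.mem_orthogonal S w).mp hw _ (hB a u hu)
  have hPBadj : ∀ a : Fin 4, P ∘ₗ (LinearMap.adjoint (B a) ∘ₗ P)
      = LinearMap.adjoint (B a) ∘ₗ P := by
    intro a
    ext v
    exact hPid _ (hadjmem a _ (hPmem v))
  let b := stdOrthonormalBasis ℂ V
  -- the two operator identities per a
  have hlie : ∀ a : Fin 4, LinearMap.trace ℂ V (P ∘ₗ ⁅B a, LinearMap.adjoint (B a)⁆ ∘ₗ P)
      = ((∑ i, ‖(P ∘ₗ B a ∘ₗ P) (b i)‖ ^ 2 : ℝ) : ℂ)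
        - ((∑ i, ‖(B a ∘ₗ P) (b i)‖ ^ 2 : ℝ) : ℂ) := by
    intro a
    have hXadj : LinearMap.adjoint (P ∘ₗ B a ∘ₗ P) = P ∘ₗ (LinearMap.adjoint (B a) ∘ₗ P) := by
      rw [LinearMap.adjoint_comp, LinearMap.adjoint_comp, hPadj]
      rfl
    have h1 : P ∘ₗ (B a ∘ₗ LinearMap.adjoint (B a)) ∘ₗ P
        = (P ∘ₗ B a ∘ₗ P) ∘ₗ LinearMap.adjoint (P ∘ₗ B a ∘ₗ P) := by
      rw [hXadj, hPBadj]
      ext v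
      have h3 : P ((LinearMap.adjoint (B a)) (P v)) = (LinearMap.adjoint (B a)) (P v) :=
        hPid _ (hadjmem a _ (hPmem v))
      simp [LinearMap.comp_apply, h3]
    have h2 : P ∘ₗ (LinearMap.adjoint (B a) ∘ₗ B a) ∘ₗ P
        = LinearMap.adjoint (B a ∘ₗ P) ∘ₗ (B a ∘ₗ P) := by
      rw [LinearMap.adjoint_comp, hPadj]
      ext v
      simp [LinearMap.comp_apply]
    have hbr : P ∘ₗ ⁅B a, LinearMap.adjoint (B a)⁆ ∘ₗ P
        = (P ∘ₗ B a ∘ₗ P) ∘ₗ LinearMap.adjoint (P ∘ₗ B a ∘ₗ P)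
          - LinearMap.adjoint (B a ∘ₗ P) ∘ₗ (B a ∘ₗ P) := by
      rw [Ring.lie_def, ← h1, ← h2]
      ext v
      simp [LinearMap.comp_apply, LinearMap.sub_apply, map_sub]
    rw [hbr, map_sub,
      show (P ∘ₗ B a ∘ₗ P) ∘ₗ LinearMap.adjoint (P ∘ₗ B a ∘ₗ P)
        = (P ∘ₗ B a ∘ₗ P) * LinearMap.adjoint (P ∘ₗ B a ∘ₗ P) from rfl,
      LinearMap.trace_mul_comm,
      show LinearMap.adjoint (P ∘ₗ B a ∘ₗ P) * (P ∘ₗ B a ∘ₗ P)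
        = LinearMap.adjoint (P ∘ₗ B a ∘ₗ P) ∘ₗ (P ∘ₗ B a ∘ₗ P) from rfl,
      trace_adjoint_comp_eq b, trace_adjoint_comp_eq b]
  -- the I terms vanish
  have hIterm : ∀ A : Fin N, P ∘ₗ (I A ∘ₗ LinearMap.adjoint (I A)) ∘ₗ P = 0 := by
    intro A
    have hPI : P ∘ₗ I A = 0 := by
      ext w
      exact hPS _ (hI A ⟨w, rfl⟩)
    ext v
    have := congrFun (congrArg DFunLike.coe hPI) (LinearMap.adjoint (I A) (P v))
    simpa [LinearMap.comp_apply] using this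
  -- take traces in hD
  have key := congrArg (fun T : V →ₗ[ℂ] V => LinearMap.trace ℂ V (P ∘ₗ T ∘ₗ P)) hD
  have hRHS : LinearMap.trace ℂ V (P ∘ₗ ((ζ : ℂ) • (LinearMap.id : V →ₗ[ℂ] V)) ∘ₗ P)
      = (ζ : ℂ) * ((∑ i, ‖P (b i)‖ ^ 2 : ℝ) : ℂ) := by
    have hc : P ∘ₗ ((ζ : ℂ) • (LinearMap.id : V →ₗ[ℂ] V)) ∘ₗ P = (ζ : ℂ) • (P ∘ₗ P) := by
      ext v
      simp only [LinearMap.comp_apply, LinearMap.smul_apply, LinearMap.id_apply, map_smul]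
    rw [hc, map_smul, smul_eq_mul]
    congr 1
    rw [show P ∘ₗ P = LinearMap.adjoint P ∘ₗ P from by rw [hPadj],
      trace_adjoint_comp_eq b]
  -- expand LHS of key
  have hLHS : LinearMap.trace ℂ V
      (P ∘ₗ (∑ a : Fin 4, ⁅B a, LinearMap.adjoint (B a)⁆
        + ∑ A : Fin N, (I A) ∘ₗ LinearMap.adjoint (I A)) ∘ₗ P)
      = ∑ a : Fin 4, LinearMap.trace ℂ V (P ∘ₗ ⁅B a, LinearMap.adjoint (B a)⁆ ∘ₗ P)
        + ∑ A : Fin N,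
          LinearMap.trace ℂ V (P ∘ₗ ((I A) ∘ₗ LinearMap.adjoint (I A)) ∘ₗ P) := by
    simp only [LinearMap.comp_add, LinearMap.add_comp, map_add]
    congr 1 <;>
    · rw [show ∀ (f : _ → V →ₗ[ℂ] V) (s : Finset _),
        P ∘ₗ (∑ j ∈ s, f j) ∘ₗ P = ∑ j ∈ s, P ∘ₗ f j ∘ₗ P from fun f s => by
          induction s using Finset.induction with
          | empty => ext v; simp
          | insert _ _ h ih =>
            rw [Finset.sum_insert h, Finset.sum_insert h, ← ih]
            ext v; simp [LinearMap.comp_apply], map_sum]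
  rw [hLHS, hRHS] at key
  simp only [hIterm, map_zero, Finset.sum_const_zero, add_zero] at key
  -- take real parts
  have hre := congrArg Complex.re key
  simp only [Complex.mul_re, Complex.ofReal_re, Complex.ofReal_im, mul_zero, sub_zero,
    Complex.re_sum] at hre
  -- LHS real part is nonpositive
  have hLHSle : (∑ a : Fin 4,
      LinearMap.trace ℂ V (P ∘ₗ ⁅B a, LinearMap.adjoint (B a)⁆ ∘ₗ P)).re ≤ 0 := by
    rw [Complex.re_sum]
    refine Finset.sum_nonpos fun a _ => ?_
    rw [hlie a]
    simp only [Complex.sub_re, Complex.ofReal_re]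
    have : ∀ i, ‖(P ∘ₗ B a ∘ₗ P) (b i)‖ ^ 2 ≤ ‖(B a ∘ₗ P) (b i)‖ ^ 2 := by
      intro i
      have h := hPnorm ((B a ∘ₗ P) (b i))
      have h2 : (P ∘ₗ B a ∘ₗ P) (b i) = P ((B a ∘ₗ P) (b i)) := rfl
      rw [h2]
      exact pow_le_pow_left₀ (norm_nonneg _) h 2
    have hsum := Finset.sum_le_sum (s := Finset.univ) (fun i _ => this i)
    linarith
  -- RHS is positive
  have hpos : 0 < ∑ i, ‖P (b i)‖ ^ 2 := by
    have hex : ∃ i, P (b i) ≠ 0 := by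
      by_contra hall
      push_neg at hall
      have hP0 : P = 0 := b.toBasis.ext fun i => by
        simp [OrthonormalBasis.coe_toBasis, hall i]
      have := hPid x hxmem
      rw [hP0] at this
      exact hx0 (by simpa using this.symm)
    obtain ⟨i, hi⟩ := hex
    refine Finset.sum_pos' (fun j _ => sq_nonneg _) ⟨i, Finset.mem_univ i, ?_⟩
    exact pow_pos (norm_pos_iff.mpr hi) 2
  have := mul_pos hζ hpos
  rw [Complex.re_sum] at hLHSle
  linarith
end
end

section
/- Let V = ⨁_{n∈ℤ} Vⁿ be an orthogonal decomposition of a finite-dimensional complex Hermitian space with dim V = k (only finitely many Vⁿ nonzero), let W be a Hermitian space, B_1, B_2, B_3 ∈ End(V) with B_a(Vⁿ) ⊆ V^{n−1} for all a and n, and I ∈ Hom(W, V) with im(I) ⊆ V⁰. Suppose that for some ζ > 0 the D-term equation Σ_{a=1}^{3}[B_a, B_a†] + I I† = ζ·1_V holds. Then Σ_{a=1}^{3} ‖B_a‖_F² ≤ ζ·k³ and ‖I‖_F² = ζ·k. In particular the set of such data (B_a, I) is bounded in the Frobenius norm. -/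
noncomputable section

section helpers
variable {E F : Type*} [NormedAddCommGroup E] [InnerProductSpace ℂ E] [FiniteDimensional ℂ E]
  [NormedAddCommGroup F] [InnerProductSpace ℂ F] [FiniteDimensional ℂ F]

lemma aux_trace_eq_sum_inner (f : E →ₗ[ℂ] E) :
    LinearMap.trace ℂ E f
      = ∑ i, inner ℂ ((stdOrthonormalBasis ℂ E) i) (f ((stdOrthonormalBasis ℂ E) i)) := by
  set b := stdOrthonormalBasis ℂ E
  rw [LinearMap.trace_eq_matrix_trace ℂ b.toBasis f, Matrix.trace]
  simp [Matrix.diag, LinearMap.toMatrix_apply, OrthonormalBasis.coe_toBasis,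
    OrthonormalBasis.coe_toBasis_repr_apply, OrthonormalBasis.repr_apply_apply]

lemma aux_trace_adjoint_comp_self_re_nonneg (T : E →ₗ[ℂ] F) :
    0 ≤ (LinearMap.trace ℂ E (LinearMap.adjoint T ∘ₗ T)).re := by
  rw [aux_trace_eq_sum_inner, Complex.re_sum]
  apply Finset.sum_nonneg; intro i _
  simp only [LinearMap.comp_apply, LinearMap.adjoint_inner_right]
  simpa using inner_self_nonneg (𝕜 := ℂ) (x := T ((stdOrthonormalBasis ℂ E) i))
end helpers

/-- boundedness of graded (torus-invariant) ADHM data on `ℂ³`. Given an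
orthogonal decomposition `V = ⨁_{n∈ℤ} Vⁿ`, operators `B_a` of degree `−1`, a framing map
`I` with image in `V⁰`, and the D-term equation `Σ_a [B_a,B_a†] + I I† = ζ·1_V` with
`ζ > 0`, one has `Σ_a ‖B_a‖_F² ≤ ζ·k³` and `‖I‖_F² = ζ·k`, where `k = dim V`. -/
theorem stmt16 {V W : Type*}
    [NormedAddCommGroup V] [InnerProductSpace ℂ V] [FiniteDimensional ℂ V]
    [NormedAddCommGroup W] [InnerProductSpace ℂ W] [FiniteDimensional ℂ W]
    (Vn : ℤ → Submodule ℂ V) (hdecomp : DirectSum.IsInternal Vn)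
    (horth : ∀ m n : ℤ, m ≠ n → ∀ v ∈ Vn m, ∀ w ∈ Vn n, inner ℂ v w = (0 : ℂ))
    (B : Fin 3 → (V →ₗ[ℂ] V)) (hB : ∀ (a : Fin 3) (n : ℤ), ∀ v ∈ Vn n, B a v ∈ Vn (n - 1))
    (I : W →ₗ[ℂ] V) (hI : LinearMap.range I ≤ Vn 0)
    (ζ : ℝ) (hζ : 0 < ζ)
    (hD : ∑ a : Fin 3, ⁅B a, LinearMap.adjoint (B a)⁆ + I ∘ₗ LinearMap.adjoint I
        = (ζ : ℂ) • (LinearMap.id : V →ₗ[ℂ] V)) :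
    (∑ a : Fin 3, (LinearMap.trace ℂ V (LinearMap.adjoint (B a) ∘ₗ B a)).re)
        ≤ ζ * (Module.finrank ℂ V : ℝ) ^ 3 ∧
      (LinearMap.trace ℂ V (I ∘ₗ LinearMap.adjoint I)).re
        = ζ * (Module.finrank ℂ V : ℝ) := by
  classical
  set k := Module.finrank ℂ V with hk
  -- the orthogonal projections onto the graded pieces, as endomorphisms
  set P : ℤ → (V →ₗ[ℂ] V) :=
    fun n => ((Vn n).subtypeL ∘L Submodule.orthogonalProjectionOnto (Vn n) : V →L[ℂ] V) with hPdef
  have hP_apply : ∀ n v, P n v = ((Submodule.orthogonalProjectionOnto (Vn n) v : Vn n) : V) := fun n v => rfl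
  have hPmem : ∀ n v, P n v ∈ Vn n := fun n v => by
    rw [hP_apply]; exact Submodule.coe_mem _
  have hPid : ∀ n v, v ∈ Vn n → P n v = v := by
    intro n v hv
    exact Submodule.starProjection_eq_self_iff.mpr hv
  have hPzero : ∀ m n, m ≠ n → ∀ v ∈ Vn m, P n v = 0 := by
    intro m n hmn v hv
    have hvmem : v ∈ (Vn n)ᗮ := by
      intro u hu
      exact horth n m (fun h => hmn h.symm) u hu v hv
    rw [hP_apply, Submodule.orthogonalProjectionOnto_apply_of_mem_orthogonal hvmem]
    simp
  have hPadj : ∀ n, LinearMap.adjoint (P n) = P n := by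
    intro n
    have h := (LinearMap.isSymmetric_iff_isSelfAdjoint (P n)).mp
      (Submodule.starProjection_isSymmetric (Vn n))
    rw [← LinearMap.star_eq_adjoint]
    exact h
  have hPP : ∀ n, P n * P n = P n := fun n =>
    LinearMap.ext fun v => hPid n _ (hPmem n v)
  -- the finite support of the grading
  have hfin : {n : ℤ | Vn n ≠ ⊥}.Finite :=
    WellFoundedGT.finite_ne_bot_of_iSupIndep hdecomp.submodule_iSupIndep
  set s : Finset ℤ := hfin.toFinset with hsdef
  have hs_mem : ∀ n, n ∈ s ↔ Vn n ≠ ⊥ := fun n => hfin.mem_toFinset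
  have hPbot : ∀ n ∉ s, P n = 0 := by
    intro n hn
    have hbot : Vn n = ⊥ := by
      by_contra h; exact hn ((hs_mem n).mpr h)
    ext v
    have := hPmem n v
    rw [hbot] at this
    simpa using this
  -- the projections sum to the identity
  have hsum : ∑ n ∈ s, P n = LinearMap.id := by
    have hle : ∀ m, Vn m ≤ LinearMap.ker ((∑ n ∈ s, P n) - LinearMap.id) := by
      intro m v hv
      simp only [LinearMap.mem_ker, LinearMap.sub_apply, LinearMap.id_apply,
        LinearMap.sum_apply, sub_eq_zero]
      by_cases hm : m ∈ s
      · rw [Finset.sum_eq_single_of_mem m hm]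
        · exact hPid m v hv
        · intro n hn hnm
          exact hPzero m n (fun h => hnm h.symm) v hv
      · have hbot : Vn m = ⊥ := by
          by_contra h; exact hm ((hs_mem m).mpr h)
        rw [hbot] at hv
        simp only [Submodule.mem_bot] at hv
        subst hv
        simp
    have h2 : (⊤ : Submodule ℂ V) ≤ LinearMap.ker ((∑ n ∈ s, P n) - LinearMap.id) := by
      rw [← hdecomp.submodule_iSup_eq_top]
      exact iSup_le hle
    have h3 := LinearMap.ker_eq_top.mp (top_le_iff.mp h2)
    exact sub_eq_zero.mp h3
  -- degree −1 property at the level of projections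
  have hPB : ∀ a n, P n * B a = B a * P (n + 1) := by
    intro a n
    ext v
    have hv : B a v = ∑ m ∈ s, B a (P m v) := by
      conv_lhs => rw [← LinearMap.id_apply (R := ℂ) v, ← hsum]
      rw [LinearMap.sum_apply, map_sum]
    have hterm : ∀ m : ℤ, P n (B a (P m v)) = if m = n + 1 then B a (P m v) else 0 := by
      intro m
      have hmem : B a (P m v) ∈ Vn (m - 1) := hB a m _ (hPmem m v)
      by_cases hm : m = n + 1
      · subst hm
        have : (n + 1 - 1 : ℤ) = n := by ring
        rw [this] at hmem
        simp [hPid n _ hmem]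
      · have hne : (m - 1 : ℤ) ≠ n := by omega
        simp [hm, hPzero (m - 1) n hne _ hmem]
    simp only [Module.End.mul_apply]
    rw [hv, map_sum]
    simp only [hterm]
    rw [Finset.sum_ite_eq' s (n + 1) (fun m => B a (P m v))]
    by_cases hns : (n + 1) ∈ s
    · simp [hns]
    · simp [hns, hPbot _ hns]
  -- trace of a projection is the dimension
  have hPtr : ∀ n, LinearMap.trace ℂ V (P n) = (Module.finrank ℂ (Vn n) : ℂ) := by
    intro n
    have h1 : P n = (Vn n).subtype ∘ₗ ((Submodule.orthogonalProjectionOnto (Vn n)).toLinearMap) := rfl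
    rw [h1, LinearMap.trace_comp_comm']
    have h2 : ((Submodule.orthogonalProjectionOnto (Vn n)).toLinearMap) ∘ₗ (Vn n).subtype = LinearMap.id := by
      ext x
      simp [Submodule.orthogonalProjectionOnto_mem_subspace_eq_self]
    rw [h2, LinearMap.trace_id]
  -- cyclicity helper
  have cyc : ∀ (T : V →ₗ[ℂ] V) (n : ℤ),
      LinearMap.trace ℂ V (T * P n) = LinearMap.trace ℂ V (P n * T * P n) := by
    intro T n
    calc LinearMap.trace ℂ V (T * P n) = LinearMap.trace ℂ V ((T * P n) * P n) := by
          rw [mul_assoc, hPP]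
      _ = LinearMap.trace ℂ V (P n * (T * P n)) := LinearMap.trace_mul_comm ℂ _ _
      _ = LinearMap.trace ℂ V (P n * T * P n) := by rw [mul_assoc]
  -- real quantities
  set d : ℤ → ℝ := fun n => (Module.finrank ℂ (Vn n) : ℝ) with hddef
  set b : ℤ → ℝ := fun n => ∑ a : Fin 3,
    (LinearMap.trace ℂ V (LinearMap.adjoint (B a ∘ₗ P n) ∘ₗ (B a ∘ₗ P n))).re with hbdef
  have hbnn : ∀ n, 0 ≤ b n := fun n =>
    Finset.sum_nonneg fun a _ => aux_trace_adjoint_comp_self_re_nonneg _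
  have hdnn : ∀ n, 0 ≤ d n := fun n => Nat.cast_nonneg _
  have hb_out : ∀ n ∉ s, b n = 0 := by
    intro n hn
    simp [hbdef, hPbot n hn]
  have hd_out : ∀ n ∉ s, d n = 0 := by
    intro n hn
    have hbot : Vn n = ⊥ := by
      by_contra h; exact hn ((hs_mem n).mpr h)
    simp [hddef, hbot]
  have adjmul : ∀ (f g : V →ₗ[ℂ] V),
      LinearMap.adjoint (f * g) = LinearMap.adjoint g * LinearMap.adjoint f := by
    intro f g
    rw [Module.End.mul_eq_comp, LinearMap.adjoint_comp, Module.End.mul_eq_comp]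
  -- identify the three trace terms paired against `P n`
  have h2 : ∀ (a : Fin 3) (n : ℤ),
      LinearMap.trace ℂ V ((LinearMap.adjoint (B a) * B a) * P n)
        = LinearMap.trace ℂ V (LinearMap.adjoint (B a ∘ₗ P n) ∘ₗ (B a ∘ₗ P n)) := by
    intro a n
    rw [cyc]
    simp only [← Module.End.mul_eq_comp]
    rw [adjmul, hPadj]
    noncomm_ring
  have h1 : ∀ (a : Fin 3) (n : ℤ),
      LinearMap.trace ℂ V ((B a * LinearMap.adjoint (B a)) * P n)
        = LinearMap.trace ℂ V
            (LinearMap.adjoint (B a ∘ₗ P (n + 1)) ∘ₗ (B a ∘ₗ P (n + 1))) := by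
    intro a n
    rw [cyc]
    have key : P n * (B a * LinearMap.adjoint (B a)) * P n
        = (B a * P (n + 1)) * LinearMap.adjoint (B a * P (n + 1)) := by
      calc P n * (B a * LinearMap.adjoint (B a)) * P n
          = (P n * B a) * LinearMap.adjoint (P n * B a) := by
            rw [adjmul, hPadj]; noncomm_ring
        _ = (B a * P (n + 1)) * LinearMap.adjoint (B a * P (n + 1)) := by rw [hPB]
    rw [key, LinearMap.trace_mul_comm]
    simp only [Module.End.mul_eq_comp]
  have h3 : ∀ n : ℤ, 0 ≤ (LinearMap.trace ℂ V ((I ∘ₗ LinearMap.adjoint I) * P n)).re := by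
    intro n
    rw [cyc]
    have key : P n * (I ∘ₗ LinearMap.adjoint I) * P n
        = LinearMap.adjoint (LinearMap.adjoint I ∘ₗ P n) ∘ₗ (LinearMap.adjoint I ∘ₗ P n) := by
      rw [LinearMap.adjoint_comp, LinearMap.adjoint_adjoint, hPadj]
      simp only [Module.End.mul_eq_comp, LinearMap.comp_assoc]
    rw [key]
    exact aux_trace_adjoint_comp_self_re_nonneg _
  -- the traced D-term equation against `P n`
  have hrec : ∀ n : ℤ, b (n + 1) ≤ b n + ζ * d n := by
    intro n
    have hDn := congrArg (fun T : V →ₗ[ℂ] V => LinearMap.trace ℂ V (T * P n)) hD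
    rw [add_mul, Finset.sum_mul, map_add, map_sum] at hDn
    have hlie : ∀ a : Fin 3, ⁅B a, LinearMap.adjoint (B a)⁆ * P n
        = (B a * LinearMap.adjoint (B a)) * P n
          - (LinearMap.adjoint (B a) * B a) * P n := by
      intro a
      rw [Ring.lie_def, sub_mul]
    have hrhs : ((ζ : ℂ) • (LinearMap.id : V →ₗ[ℂ] V)) * P n = (ζ : ℂ) • P n := by
      rw [smul_mul_assoc, ← Module.End.one_eq_id, one_mul]
    simp only [hlie, map_sub, hrhs, map_smul, hPtr, ← Module.End.mul_eq_comp] at hDn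
    rw [Finset.sum_sub_distrib] at hDn
    simp only [h1, h2] at hDn
    -- take real parts
    have hre := congrArg Complex.re hDn
    simp only [Complex.add_re, Complex.sub_re, Complex.re_sum, Complex.sub_re,
      smul_eq_mul, Complex.mul_re, Complex.ofReal_re, Complex.ofReal_im,
      Complex.natCast_re, Complex.natCast_im, mul_zero, zero_mul, sub_zero] at hre
    have hb1 : b (n + 1) = ∑ a : Fin 3,
        ((LinearMap.trace ℂ V)
          (LinearMap.adjoint (B a ∘ₗ P (n + 1)) ∘ₗ (B a ∘ₗ P (n + 1)))).re := rfl
    have hb0 : b n = ∑ a : Fin 3,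
        ((LinearMap.trace ℂ V)
          (LinearMap.adjoint (B a ∘ₗ P n) ∘ₗ (B a ∘ₗ P n))).re := rfl
    have hIre := h3 n
    rw [← hb1, ← hb0] at hre
    have hdd : d n = (Module.finrank ℂ (Vn n) : ℝ) := rfl
    rw [hdd]
    linarith [hre, hIre]
  -- base point below the support
  obtain ⟨n0, hn0⟩ : ∃ n0 : ℤ, ∀ m ∈ s, n0 < m := by
    rcases s.eq_empty_or_nonempty with h | h
    · exact ⟨0, by simp [h]⟩
    · exact ⟨s.min' h - 1, fun m hm => by have := s.min'_le m hm; omega⟩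
  have claim : ∀ j : ℕ, b (n0 + j) ≤ ζ * ∑ m ∈ s.filter (fun m => m < n0 + j), d m := by
    intro j
    induction j with
    | zero =>
      have hn0s : n0 ∉ s := fun h => lt_irrefl n0 (hn0 n0 h)
      rw [Nat.cast_zero, add_zero, hb_out n0 hn0s]
      exact mul_nonneg hζ.le (Finset.sum_nonneg fun m _ => hdnn m)
    | succ j ih =>
      have hcast : (n0 + ((j+1 : ℕ) : ℤ)) = (n0 + (j : ℕ)) + 1 := by push_cast; ring
      rw [hcast]
      have h1 := hrec (n0 + (j : ℕ))
      have hfil : ∑ m ∈ s.filter (fun m => m < n0 + (j : ℕ)), d m + d (n0 + (j : ℕ))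
          = ∑ m ∈ s.filter (fun m => m < (n0 + (j : ℕ)) + 1), d m := by
        by_cases hmem : (n0 + (j : ℕ) : ℤ) ∈ s
        · have hins : s.filter (fun m => m < (n0 + (j : ℕ)) + 1)
              = insert (n0 + (j : ℕ) : ℤ) (s.filter (fun m => m < n0 + (j : ℕ))) := by
            ext m
            simp only [Finset.mem_filter, Finset.mem_insert]
            constructor
            · rintro ⟨hms, hlt⟩
              rcases eq_or_ne m (n0 + (j : ℕ)) with h | h
              · exact Or.inl h
              · exact Or.inr ⟨hms, by omega⟩
            · rintro (rfl | ⟨hms, hlt⟩)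
              · exact ⟨hmem, by omega⟩
              · exact ⟨hms, by omega⟩
          rw [hins, Finset.sum_insert (by simp [Finset.mem_filter])]
          ring
        · have hd0 : d (n0 + (j : ℕ)) = 0 := hd_out _ hmem
          have hfe : s.filter (fun m => m < (n0 + (j : ℕ)) + 1)
              = s.filter (fun m => m < n0 + (j : ℕ)) := by
            ext m
            simp only [Finset.mem_filter]
            constructor
            · rintro ⟨hms, hlt⟩
              refine ⟨hms, ?_⟩
              rcases eq_or_ne m (n0 + (j : ℕ)) with rfl | h
              · exact absurd hms hmem
              · omega
            · rintro ⟨hms, hlt⟩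
              exact ⟨hms, by omega⟩
          rw [hd0, add_zero, hfe]
      calc b ((n0 + (j : ℕ)) + 1) ≤ b (n0 + (j : ℕ)) + ζ * d (n0 + (j : ℕ)) := h1
        _ ≤ ζ * ∑ m ∈ s.filter (fun m => m < n0 + (j : ℕ)), d m + ζ * d (n0 + (j : ℕ)) := by
            linarith [ih, hdnn (n0 + (j : ℕ))]
        _ = ζ * (∑ m ∈ s.filter (fun m => m < n0 + (j : ℕ)), d m + d (n0 + (j : ℕ))) := by ring
        _ = ζ * ∑ m ∈ s.filter (fun m => m < (n0 + (j : ℕ)) + 1), d m := by rw [hfil]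
  -- total dimension
  have hsumdC : ∑ m ∈ s, (Module.finrank ℂ (Vn m) : ℂ) = (k : ℂ) := by
    have h := congrArg (LinearMap.trace ℂ V) hsum
    rw [map_sum, LinearMap.trace_id] at h
    simpa [hPtr] using h
  have hsumd : ∑ m ∈ s, d m = (k : ℝ) := by
    have h := congrArg Complex.re hsumdC
    simpa [Complex.re_sum] using h
  have hbound : ∀ n, b n ≤ ζ * (k : ℝ) := by
    intro n
    by_cases hn : n ∈ s
    · obtain ⟨j, hj⟩ : ∃ j : ℕ, n = n0 + j := ⟨(n - n0).toNat, by have := hn0 n hn; omega⟩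
      rw [hj]
      refine (claim j).trans ?_
      rw [← hsumd]
      refine mul_le_mul_of_nonneg_left ?_ hζ.le
      exact Finset.sum_le_sum_of_subset_of_nonneg (Finset.filter_subset _ _)
        (fun m _ _ => hdnn m)
    · rw [hb_out n hn]
      positivity
  have hcard : (s.card : ℝ) ≤ (k : ℝ) := by
    rw [← hsumd]
    calc (s.card : ℝ) = ∑ _m ∈ s, (1 : ℝ) := by simp
      _ ≤ ∑ m ∈ s, d m := Finset.sum_le_sum fun m hm => by
          have h1 : 1 ≤ Module.finrank ℂ (Vn m) :=
            Submodule.one_le_finrank_iff.mpr ((hs_mem m).mp hm)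
          have hdm : d m = (Module.finrank ℂ (Vn m) : ℝ) := rfl
          rw [hdm]
          exact_mod_cast h1
  -- splitting the total Frobenius norm over the graded pieces
  have hsplit : (∑ a : Fin 3, (LinearMap.trace ℂ V (LinearMap.adjoint (B a) ∘ₗ B a)).re)
      = ∑ n ∈ s, b n := by
    have hterm : ∀ a : Fin 3, LinearMap.trace ℂ V (LinearMap.adjoint (B a) ∘ₗ B a)
        = ∑ n ∈ s, LinearMap.trace ℂ V (LinearMap.adjoint (B a ∘ₗ P n) ∘ₗ (B a ∘ₗ P n)) := by
      intro a
      have e1 : LinearMap.adjoint (B a) ∘ₗ B a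
          = ∑ n ∈ s, (LinearMap.adjoint (B a) * B a) * P n := by
        rw [← Finset.mul_sum, hsum, ← Module.End.mul_eq_comp, ← Module.End.one_eq_id, mul_one]
      rw [e1, map_sum]
      exact Finset.sum_congr rfl fun n _ => h2 a n
    calc (∑ a : Fin 3, (LinearMap.trace ℂ V (LinearMap.adjoint (B a) ∘ₗ B a)).re)
        = ∑ a : Fin 3, ∑ n ∈ s,
            (LinearMap.trace ℂ V (LinearMap.adjoint (B a ∘ₗ P n) ∘ₗ (B a ∘ₗ P n))).re := by
          refine Finset.sum_congr rfl fun a _ => ?_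
          rw [hterm a, Complex.re_sum]
      _ = ∑ n ∈ s, b n := Finset.sum_comm
  constructor
  · rw [hsplit]
    calc ∑ n ∈ s, b n ≤ ∑ _n ∈ s, ζ * (k : ℝ) := Finset.sum_le_sum fun n _ => hbound n
      _ = s.card * (ζ * (k : ℝ)) := by rw [Finset.sum_const, nsmul_eq_mul]
      _ ≤ (k : ℝ) * (ζ * (k : ℝ)) := mul_le_mul_of_nonneg_right hcard (by positivity)
      _ = ζ * (k : ℝ) ^ 2 := by ring
      _ ≤ ζ * (k : ℝ) ^ 3 := by
          refine mul_le_mul_of_nonneg_left ?_ hζ.le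
          have hnat : (k ^ 2 : ℕ) ≤ k ^ 3 := by
            rcases Nat.eq_zero_or_pos k with h | h
            · simp [h]
            · exact Nat.pow_le_pow_right h (by norm_num)
          exact_mod_cast hnat
  · have htr := congrArg (LinearMap.trace ℂ V) hD
    rw [map_add, map_sum, map_smul, LinearMap.trace_id] at htr
    have hlz : ∀ a : Fin 3, LinearMap.trace ℂ V ⁅B a, LinearMap.adjoint (B a)⁆ = 0 := by
      intro a
      rw [Ring.lie_def, map_sub, LinearMap.trace_mul_comm, sub_self]
    rw [Finset.sum_congr rfl (fun a _ => hlz a), Finset.sum_const, smul_zero, zero_add] at htr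
    rw [htr]
    simp [smul_eq_mul, Complex.mul_re, hk]

end
end
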